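/- Let m ≥ 2, σ > 1, H > 0, p > 0, and let Q : (0,∞) → ℝ be a positive non-decreasing function with Q(t) = o(t²) as t → +∞. Let a, b : ℝ^m → ℝ be continuous functions such that b(x) ≥ 1/Q(|x|) for |x| > 0, the negative part a_-(x) = max(−a(x), 0) is bounded on ℝ^m, and a_-(x)/b(x) ≤ H for all x ∈ ℝ^m. Suppose u ∈ C²(ℝ^m) is a non-negative function satisfying Δu(x) ≥ b(x) u(x)^σ + a(x) u(x) for all x ∈ ℝ^m, and liminf_{r→+∞} (Q(r)/r²) ∫_{B_r} |u|^p dx < +∞, where B_r is the Euclidean ball of radius r centered at the origin. Then u(x) ≤ H^{1/(σ−1)} for all x ∈ ℝ^m. -/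

import Mathlib

open Filter Asymptotics

/-- The Laplacian on Euclidean space: the sum of the pure second partial derivatives. -/
noncomputable def euclideanLaplacian {m : ℕ} (u : EuclideanSpace ℝ (Fin m) → ℝ)
    (x : EuclideanSpace ℝ (Fin m)) : ℝ :=
  ∑ i, fderiv ℝ (fun y => fderiv ℝ u y (EuclideanSpace.single i 1)) x (EuclideanSpace.single i 1)

/-!
Put `K = H ^ (1 / (σ - 1))`, the positive zero of `t ↦ t ^ σ - H t`, and suppose `u x₀ > K + ε`.
The barrier `w y = ε R ^ (2n) / (R² - ‖y - x₀‖²) ^ n` equals `ε` at `x₀` and blows up on the sphere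
`‖y - x₀‖ = R`, so `u - w` has an interior local maximum `x₁` with `u x₁ > K + w x₁`. Writing
`ρ = R² / (R² - ‖x₁ - x₀‖²) ≥ 1`, we have `w x₁ = ε ρ ^ n` and
`Δu x₁ ≤ Δw x₁ ≤ C ε ρ ^ (n + 2) / R²` with `C = 4n(n + 1) + 2nm`, while the inequality for `u`,
with `b ≥ 1 / Q (‖x₀‖ + R)` on the ball, gives
`Δu x₁ > (σ - 1) / σ * (w x₁) ^ σ / Q (‖x₀‖ + R)`. Once `n (σ - 1) ≥ 2` these are incompatible
whenever `C Q (‖x₀‖ + R) ≤ (σ - 1) / σ * ε ^ (σ - 1) * R²`, which some `R` satisfies because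
`Q = o(t²)`. Hence `u x₀ ≤ K + ε` for every `ε > 0`.
-/

open Topology

theorem IsLocalMax.secondDeriv_nonpos {g g' : ℝ → ℝ} {x c : ℝ} (hmax : IsLocalMax g x)
    (hg : ∀ᶠ t in 𝓝 x, HasDerivAt g (g' t) t) (hg' : HasDerivAt g' c x) : c ≤ 0 := by
  -- If `c > 0`, the second derivative test makes `x` a local minimum as well, so `g` is locally
  -- constant near `x` and `c = 0`.
  by_contra! hc
  have hdg : deriv g =ᶠ[𝓝 x] g' := hg.mono fun t ht => ht.deriv
  have hd2g : deriv (deriv g) x = c := hdg.deriv_eq.trans hg'.deriv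
  have hmin : IsLocalMin g x :=
    isLocalMin_of_deriv_deriv_pos (hd2g ▸ hc)
      (hdg.eq_of_nhds.trans (hmax.hasDerivAt_eq_zero hg.self_of_nhds))
      hg.self_of_nhds.continuousAt
  have hconst : g =ᶠ[𝓝 x] fun _ => g x := (hmax.and hmin).mono fun t ht => le_antisymm ht.1 ht.2
  have hdg0 : deriv g =ᶠ[𝓝 x] fun _ => 0 :=
    hconst.eventuallyEq_nhds.mono fun t ht => ht.deriv_eq.trans (deriv_const t (g x))
  exact hc.ne' (hd2g.symm.trans (hdg0.deriv_eq.trans (deriv_const x 0)))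

theorem fderiv_fderiv_le_of_isLocalMax_sub {E : Type*} [NormedAddCommGroup E] [NormedSpace ℝ E]
    {u w : E → ℝ} {w' : ℝ → ℝ} {x v : E} {c : ℝ} (hu : ContDiff ℝ 2 u)
    (hmax : IsLocalMax (fun y => u y - w y) x)
    (hw : ∀ᶠ t in 𝓝 0, HasDerivAt (fun t : ℝ => w (x + t • v)) (w' t) t)
    (hw' : HasDerivAt w' c 0) :
    fderiv ℝ (fun y => fderiv ℝ u y v) x v ≤ c := by
  set ℓ : ℝ → E := fun t => x + t • v
  have hℓ : ∀ t, HasDerivAt ℓ v t := fun t => by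
    simpa [ℓ] using ((hasDerivAt_id t).smul_const v).const_add x
  have hℓ0 : ℓ 0 = x := by simp [ℓ]
  have hdu : ∀ t, HasDerivAt (fun t => u (ℓ t)) (fderiv ℝ u (ℓ t) v) t := fun t =>
    ((hu.differentiable two_ne_zero _).hasFDerivAt).comp_hasDerivAt t (hℓ t)
  have hd2u : HasDerivAt (fun t => fderiv ℝ u (ℓ t) v)
      (fderiv ℝ (fun y => fderiv ℝ u y v) x v) 0 := by
    have hdu' : Differentiable ℝ (fun y => fderiv ℝ u y v) :=
      ((hu.fderiv_right (by norm_num)).clm_apply contDiff_const).differentiable one_ne_zero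
    exact hℓ0 ▸ (hdu' (ℓ 0)).hasFDerivAt.comp_hasDerivAt 0 (hℓ 0)
  have hmax' : IsLocalMax (fun t => u (ℓ t) - w (ℓ t)) 0 :=
    (hℓ0 ▸ hmax).comp_continuous (hℓ 0).continuousAt
  have := hmax'.secondDeriv_nonpos (hw.mono fun t ht => (hdu t).sub ht) (hd2u.sub hw')
  linarith

theorem HasDerivAt.const_div_pow {q : ℝ → ℝ} {q' t : ℝ} (A : ℝ) (n : ℕ)
    (hq : HasDerivAt q q' t) (ht : q t ≠ 0) :
    HasDerivAt (fun t => A / q t ^ n) (-(A * n * q') / q t ^ (n + 1)) t := by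
  refine ((hasDerivAt_const t A).fun_div (hq.fun_pow n) (pow_ne_zero _ ht)).congr_deriv ?_
  generalize q t = r at ht ⊢
  rcases n with _ | n
  · simp
  · simp only [Nat.add_sub_cancel]
    field_simp
    ring

section Barrier

variable {E : Type*} [NormedAddCommGroup E]

noncomputable def barrier (x₀ : E) (R A : ℝ) (n : ℕ) (y : E) : ℝ :=
  A / (R ^ 2 - ‖y - x₀‖ ^ 2) ^ n

open Metric in
theorem exists_isLocalMax_sub_barrier [ProperSpace E]
    {u : E → ℝ} (hu : Continuous u) (x₀ : E) {R A : ℝ} {n : ℕ} (hR : 0 < R) (hA : 0 < A)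
    (hn : n ≠ 0) :
    ∃ x, ‖x - x₀‖ < R ∧ IsLocalMax (fun y => u y - barrier x₀ R A n y) x ∧
      u x₀ - barrier x₀ R A n x₀ ≤ u x - barrier x₀ R A n x := by
  set φ := fun y => u y - barrier x₀ R A n y
  obtain ⟨M, hM⟩ := (isCompact_closedBall x₀ R).bddAbove_image hu.continuousOn
  -- On the sphere `‖y - x₀‖ = r` below, `R ^ 2 - ‖y - x₀‖ ^ 2 = δ` and the barrier exceeds
  -- `M - φ x₀`, so the maximum of `φ` on the closed ball of radius `r` is attained inside.
  obtain ⟨δ, ⟨hδR, hδ1, hδA⟩, hδ⟩ : ∃ δ, (δ ≤ R ^ 2 ∧ δ ≤ 1 ∧ δ * (M - φ x₀) < A) ∧ 0 < δ :=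
    (((eventually_le_nhds (by positivity)).and ((eventually_le_nhds one_pos).and
      ((continuous_id.mul continuous_const).continuousAt.eventually_lt continuousAt_const
        (by simpa using hA)))).filter_mono nhdsWithin_le_nhds).and self_mem_nhdsWithin
      |>.exists (f := 𝓝[>] (0 : ℝ))
  set r := √(R ^ 2 - δ)
  have hrR : r ≤ R := by
    rw [Real.sqrt_le_left hR.le]
    linarith
  have hS : ∀ y ∈ closedBall x₀ r, δ ≤ R ^ 2 - ‖y - x₀‖ ^ 2 := fun y hy => by
    have := pow_le_pow_left₀ (norm_nonneg _) (mem_closedBall_iff_norm.mp hy) 2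
    rw [Real.sq_sqrt (by linarith)] at this
    linarith
  have hφ : ContinuousOn φ (closedBall x₀ r) :=
    hu.continuousOn.sub <| continuousOn_const.div (by fun_prop) fun y hy =>
      pow_ne_zero _ (hδ.trans_le (hS y hy)).ne'
  obtain ⟨x, hx, hxmax⟩ := (isCompact_closedBall x₀ r).exists_isMaxOn
    ⟨x₀, mem_closedBall_self (Real.sqrt_nonneg _)⟩ hφ
  have hφx : φ x₀ ≤ φ x := hxmax (mem_closedBall_self (Real.sqrt_nonneg _))
  have hxr : ‖x - x₀‖ < r := by
    refine (mem_closedBall_iff_norm.mp hx).lt_of_ne fun h => ?_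
    have hδn : δ ^ n ≤ δ := pow_le_of_le_one hδ.le hδ1 hn
    have hbarrier : M - φ x₀ < barrier x₀ R A n x := by
      rw [barrier, h, Real.sq_sqrt (by linarith), sub_sub_cancel, lt_div_iff₀ (by positivity)]
      rcases le_total (M - φ x₀) 0 with h0 | h0 <;> nlinarith [pow_pos hδ n]
    have := hM ⟨x, closedBall_subset_closedBall hrR hx, rfl⟩
    simp only [φ] at hbarrier hφx
    linarith
  exact ⟨x, hxr.trans_le hrR,
    hxmax.isLocalMax (closedBall_mem_nhds_of_mem (mem_ball_iff_norm.mpr hxr)), hφx⟩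

variable [InnerProductSpace ℝ E]

theorem barrier_add_smul (x₀ x v : E) (R A : ℝ) (n : ℕ) (t : ℝ) :
    barrier x₀ R A n (x + t • v) =
      A / (R ^ 2 - ‖x - x₀‖ ^ 2 - (2 * inner ℝ (x - x₀) v * t + ‖v‖ ^ 2 * t ^ 2)) ^ n := by
  rw [barrier, show x + t • v - x₀ = (x - x₀) + t • v by abel, norm_add_sq_real,
    inner_smul_right, norm_smul, mul_pow, Real.norm_eq_abs, sq_abs]
  ring_nf

theorem fderiv_fderiv_le_of_isLocalMax_sub_barrier {u : E → ℝ} {x₀ x : E} {R A : ℝ} {n : ℕ}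
    (hu : ContDiff ℝ 2 u) (hx : ‖x - x₀‖ < R)
    (hmax : IsLocalMax (fun y => u y - barrier x₀ R A n y) x) (v : E) :
    fderiv ℝ (fun y => fderiv ℝ u y v) x v ≤
      A * n * (4 * (n + 1) * inner ℝ (x - x₀) v ^ 2 / (R ^ 2 - ‖x - x₀‖ ^ 2) ^ (n + 2)
        + 2 * ‖v‖ ^ 2 / (R ^ 2 - ‖x - x₀‖ ^ 2) ^ (n + 1)) := by
  set s := R ^ 2 - ‖x - x₀‖ ^ 2
  set a := inner ℝ (x - x₀) v
  set c := ‖v‖ ^ 2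
  have hs : 0 < s := sub_pos.mpr (pow_lt_pow_left₀ hx (norm_nonneg _) two_ne_zero)
  set q : ℝ → ℝ := fun t => s - (2 * a * t + c * t ^ 2)
  have hq : ∀ t, HasDerivAt q (-(2 * a + 2 * c * t)) t := fun t =>
    ((((hasDerivAt_id t).const_mul (2 * a)).add
      ((hasDerivAt_pow 2 t).const_mul c)).const_sub s).congr_deriv (by simp; ring)
  have hq0 : q 0 = s := by simp [q]
  have hq_ne : ∀ᶠ t in 𝓝 0, q t ≠ 0 :=
    (hq 0).continuousAt.eventually_ne (hq0 ▸ hs.ne')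
  have hw : ∀ᶠ t in 𝓝 0, HasDerivAt (fun t : ℝ => barrier x₀ R A n (x + t • v))
      (A * n * (2 * a + 2 * c * t) * (1 / q t ^ (n + 1))) t :=
    hq_ne.mono fun t ht => by
      simp only [barrier_add_smul]
      exact ((hq t).const_div_pow A n ht).congr_deriv (by ring)
  refine fderiv_fderiv_le_of_isLocalMax_sub hu hmax hw ?_
  have hN : HasDerivAt (fun t => A * n * (2 * a + 2 * c * t)) (A * n * (2 * c)) 0 :=
    (((hasDerivAt_id 0).const_mul (2 * c)).const_add (2 * a)).const_mul (A * n) |>.congr_deriv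
      (by simp)
  refine (hN.mul ((hq 0).const_div_pow 1 (n + 1) (hq0 ▸ hs.ne'))).congr_deriv ?_
  rw [hq0]
  field_simp
  push_cast
  ring

end Barrier

theorem euclideanLaplacian_le_of_isLocalMax_sub_barrier {m : ℕ}
    {u : EuclideanSpace ℝ (Fin m) → ℝ} {x₀ x : EuclideanSpace ℝ (Fin m)} {R A : ℝ} {n : ℕ}
    (hu : ContDiff ℝ 2 u) (hA : 0 ≤ A) (hx : ‖x - x₀‖ < R)
    (hmax : IsLocalMax (fun y => u y - barrier x₀ R A n y) x) :
    euclideanLaplacian u x ≤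
      (4 * n * (n + 1) + 2 * n * m) * A * R ^ 2 / (R ^ 2 - ‖x - x₀‖ ^ 2) ^ (n + 2) := by
  set s := R ^ 2 - ‖x - x₀‖ ^ 2
  have hs : 0 < s := sub_pos.mpr (pow_lt_pow_left₀ hx (norm_nonneg _) two_ne_zero)
  have hsR : s ≤ R ^ 2 := sub_le_self _ (sq_nonneg _)
  calc euclideanLaplacian u x
      ≤ ∑ i, A * n * (4 * (n + 1) * (x - x₀) i ^ 2 / s ^ (n + 2) + 2 / s ^ (n + 1)) := by
        refine Finset.sum_le_sum fun i _ => ?_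
        simpa [EuclideanSpace.inner_single_right] using
          fderiv_fderiv_le_of_isLocalMax_sub_barrier hu hx hmax (EuclideanSpace.single i 1)
    _ = A * n * (4 * (n + 1) * ‖x - x₀‖ ^ 2 / s ^ (n + 2) + 2 * m * s / s ^ (n + 2)) := by
        simp only [EuclideanSpace.norm_sq_eq, Real.norm_eq_abs, sq_abs, ← Finset.mul_sum,
          Finset.sum_add_distrib, ← Finset.sum_div]
        rw [Finset.sum_const, Finset.card_univ, Fintype.card_fin, nsmul_eq_mul, pow_succ s (n + 1)]
        field_simp
    _ ≤ A * n * (4 * (n + 1) * R ^ 2 / s ^ (n + 2) + 2 * m * R ^ 2 / s ^ (n + 2)) := by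
        gcongr
    _ = (4 * n * (n + 1) + 2 * n * m) * A * R ^ 2 / s ^ (n + 2) := by ring

theorem rpow_tangent_le {σ x y : ℝ} (hσ : 1 ≤ σ) (hy : 0 < y) (hx : 0 ≤ x) :
    y ^ σ + σ * y ^ (σ - 1) * (x - y) ≤ x ^ σ := by
  have hxy : 1 + (x - y) / y = x / y := by field_simp; ring
  calc y ^ σ + σ * y ^ (σ - 1) * (x - y) = y ^ σ * (1 + σ * ((x - y) / y)) := by
        rw [Real.rpow_sub_one hy.ne']
        field_simp
    _ ≤ y ^ σ * (1 + (x - y) / y) ^ σ := by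
        gcongr
        exact one_add_mul_self_le_rpow_one_add (by rw [le_div_iff₀ hy]; linarith) hσ
    _ = x ^ σ := by
        rw [hxy, ← Real.mul_rpow hy.le (by positivity), mul_div_cancel₀ _ hy.ne']

theorem mul_rpow_lt_rpow_sub_mul {σ H K W U : ℝ} (hσ : 1 < σ) (hK : 0 < K)
    (hKH : K ^ (σ - 1) = H) (hW : 0 < W) (hU : K + W < U) :
    (σ - 1) / σ * W ^ σ < U ^ σ - H * U := by
  have hH : 0 < H := hKH ▸ Real.rpow_pos_of_pos hK _
  have hKσ : K ^ σ = K * H := by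
    rw [← hKH, ← Real.rpow_one_add' hK.le (by linarith)]
    ring_nf
  have hHKW : H ≤ (K + W) ^ (σ - 1) :=
    hKH ▸ Real.rpow_le_rpow hK.le (by linarith) (by linarith)
  have tangent_K := rpow_tangent_le (x := K + W) hσ.le hK (by linarith)
  have superadd := Real.add_rpow_le_rpow_add hK.le hW.le hσ.le
  have tangent_KW := rpow_tangent_le (y := K + W) (x := U) hσ.le (by linarith) (by linarith)
  rw [hKσ, hKH] at tangent_K
  rw [hKσ] at superadd
  -- average the tangent line at `K` and superadditivity with weights `1 / σ`, `(σ - 1) / σ`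
  have hKW : (σ - 1) / σ * W ^ σ ≤ (K + W) ^ σ - H * (K + W) := by
    rw [div_mul_eq_mul_div, div_le_iff₀ (by linarith)]
    nlinarith
  have hslope : σ * H * (U - (K + W)) ≤ σ * (K + W) ^ (σ - 1) * (U - (K + W)) := by
    gcongr
  have hgap : 0 < (σ - 1) * H * (U - (K + W)) := by
    have := sub_pos.mpr hU
    have := sub_pos.mpr hσ
    positivity
  linarith

theorem mul_div_pow_le_div_mul_rpow {σ ε R s C c Q : ℝ} {n : ℕ} (hε : 0 < ε) (hs : 0 < s)
    (hsR : s ≤ R ^ 2) (hn : 2 ≤ n * (σ - 1)) (hc : 0 ≤ c) (hQ : 0 < Q)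
    (hCQ : C * Q ≤ c * ε ^ (σ - 1) * R ^ 2) :
    C * (ε * R ^ (2 * n)) * R ^ 2 / s ^ (n + 2) ≤ c / Q * (ε * R ^ (2 * n) / s ^ n) ^ σ := by
  have hR : 0 < R ^ 2 := hs.trans_le hsR
  have hR0 : R ≠ 0 := by rintro rfl; simp at hR
  set ρ := R ^ 2 / s
  have hρ : 1 ≤ ρ := (one_le_div hs).mpr hsR
  have hW : ε * R ^ (2 * n) / s ^ n = ε * ρ ^ n := by rw [div_pow, pow_mul]; ring
  have hΔ : C * (ε * R ^ (2 * n)) * R ^ 2 / s ^ (n + 2) = C / R ^ 2 * (ε * ρ ^ (n + 2)) := by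
    simp only [ρ, div_pow, pow_mul]
    field_simp
    ring
  have hpow : ε * ε ^ (σ - 1) * ρ ^ (n + 2) ≤ (ε * ρ ^ n) ^ σ := by
    have hρ2 : ρ ^ 2 ≤ (ρ ^ n) ^ (σ - 1) := by
      rw [← Real.rpow_natCast_mul (by positivity), ← Real.rpow_two]
      exact Real.rpow_le_rpow_of_exponent_le hρ hn
    have hερ : 0 < ε * ρ ^ n := by positivity
    calc ε * ε ^ (σ - 1) * ρ ^ (n + 2) = ε * ρ ^ n * (ε ^ (σ - 1) * ρ ^ 2) := by ring
      _ ≤ ε * ρ ^ n * (ε ^ (σ - 1) * (ρ ^ n) ^ (σ - 1)) := by gcongr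
      _ = (ε * ρ ^ n) ^ σ := by
          rw [← Real.mul_rpow hε.le (by positivity), Real.rpow_sub_one hερ.ne',
            mul_div_cancel₀ _ hερ.ne']
  rw [hW, hΔ]
  calc C / R ^ 2 * (ε * ρ ^ (n + 2)) ≤ c / Q * ε ^ (σ - 1) * (ε * ρ ^ (n + 2)) := by
        gcongr
        rw [div_le_iff₀ hR, div_mul_eq_mul_div, div_mul_eq_mul_div, le_div_iff₀ hQ]
        linarith
    _ = c / Q * (ε * ε ^ (σ - 1) * ρ ^ (n + 2)) := by ring
    _ ≤ c / Q * (ε * ρ ^ n) ^ σ := by gcongr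

theorem le_add_of_mul_rpow_sub_mul_le_euclideanLaplacian {m n : ℕ}
    {u b : EuclideanSpace ℝ (Fin m) → ℝ} {x₀ : EuclideanSpace ℝ (Fin m)} {σ H K ε R q : ℝ}
    (hu : ContDiff ℝ 2 u) (hσ : 1 < σ) (hK : 0 < K) (hKH : K ^ (σ - 1) = H) (hε : 0 < ε)
    (hR : 0 < R) (hn : 2 ≤ n * (σ - 1)) (hq : 0 < q)
    (hbq : ∀ x, ‖x - x₀‖ < R → 1 / q ≤ b x)
    (hΔ : ∀ x, ‖x - x₀‖ < R → b x * (u x ^ σ - H * u x) ≤ euclideanLaplacian u x)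
    (hqR : (4 * n * (n + 1) + 2 * n * m) * q ≤ (σ - 1) / σ * ε ^ (σ - 1) * R ^ 2) :
    u x₀ ≤ K + ε := by
  by_contra! hx₀
  have hn0 : 0 < n := Nat.cast_pos.mp (by nlinarith : (0 : ℝ) < n)
  set A := ε * R ^ (2 * n)
  obtain ⟨x₁, hx₁R, hmax, hφ⟩ :=
    exists_isLocalMax_sub_barrier hu.continuous x₀ hR (A := A) (by positivity) hn0.ne'
  set s := R ^ 2 - ‖x₁ - x₀‖ ^ 2
  have hs : 0 < s := sub_pos.mpr (pow_lt_pow_left₀ hx₁R (norm_nonneg _) two_ne_zero)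
  have hsR : s ≤ R ^ 2 := sub_le_self _ (sq_nonneg _)
  set W := barrier x₀ R A n x₁
  have hW : W = A / s ^ n := rfl
  have hUW : K + W < u x₁ := by
    have : barrier x₀ R A n x₀ = ε := by
      simp only [barrier, A, sub_self, norm_zero, pow_mul]
      field_simp
      ring
    linarith
  have hb : 0 < b x₁ := (one_div_pos.mpr hq).trans_le (hbq x₁ hx₁R)
  have hupper := euclideanLaplacian_le_of_isLocalMax_sub_barrier hu (by positivity) hx₁R hmax
  have hc : 0 ≤ (σ - 1) / σ := div_nonneg (by linarith) (by linarith)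
  have hest := mul_div_pow_le_div_mul_rpow hε hs hsR hn hc hq hqR
  rw [← hW] at hest
  have hgap := mul_rpow_lt_rpow_sub_mul hσ hK hKH (by rw [hW]; positivity) hUW
  have hbW : (σ - 1) / σ / q * W ^ σ ≤ b x₁ * ((σ - 1) / σ * W ^ σ) :=
    calc (σ - 1) / σ / q * W ^ σ = 1 / q * ((σ - 1) / σ * W ^ σ) := by ring
      _ ≤ b x₁ * ((σ - 1) / σ * W ^ σ) := mul_le_mul_of_nonneg_right (hbq x₁ hx₁R)
          (mul_nonneg hc (Real.rpow_nonneg (by rw [hW]; positivity) σ))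
  linarith [hΔ x₁ hx₁R, mul_lt_mul_of_pos_left hgap hb]

theorem exists_pos_le_mul_sq_of_isLittleO {Q : ℝ → ℝ} (hQ : Q =o[atTop] fun t => t ^ 2)
    {a c : ℝ} (ha : 0 ≤ a) (hc : 0 < c) : ∃ R, 0 < R ∧ Q (a + R) ≤ c * R ^ 2 := by
  obtain ⟨R, hQR, haR, hR⟩ := (((tendsto_atTop_add_const_left _ a tendsto_id).eventually
    (hQ.def (by positivity : 0 < c / 4))).and
    ((eventually_ge_atTop a).and (eventually_gt_atTop 0))).exists
  refine ⟨R, hR, ?_⟩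
  simp only [id, Real.norm_eq_abs, abs_pow, sq_abs] at hQR
  have hsq : (a + R) ^ 2 ≤ 4 * R ^ 2 := by nlinarith
  calc Q (a + R) ≤ c / 4 * (a + R) ^ 2 := (le_abs_self _).trans hQR
    _ ≤ c / 4 * (4 * R ^ 2) := by gcongr
    _ = c * R ^ 2 := by ring

theorem one_div_le_of_norm_le {E : Type*} [NormedAddCommGroup E] [NormedSpace ℝ E]
    [Nontrivial E] {Q : ℝ → ℝ} {b : E → ℝ} (hQpos : ∀ t > (0 : ℝ), 0 < Q t)
    (hQmono : ∀ s t : ℝ, 0 < s → s ≤ t → Q s ≤ Q t) (hb : Continuous b)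
    (hbQ : ∀ x : E, 0 < ‖x‖ → 1 / Q ‖x‖ ≤ b x) {x : E} {t : ℝ} (ht : 0 < t) (hx : ‖x‖ ≤ t) :
    1 / Q t ≤ b x := by
  have hpos : ∀ y : E, 0 < ‖y‖ → ‖y‖ ≤ t → 1 / Q t ≤ b y := fun y hy hyt =>
    (one_div_le_one_div_of_le (hQpos _ hy) (hQmono _ _ hy hyt)).trans (hbQ y hy)
  rcases (norm_nonneg x).eq_or_lt with h0 | h0
  · obtain rfl : x = 0 := norm_eq_zero.mp h0.symm
    refine ge_of_tendsto (hb.continuousAt.tendsto.mono_left nhdsWithin_le_nhds)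
      (?_ : ∀ᶠ y in 𝓝[≠] 0, 1 / Q t ≤ b y)
    filter_upwards [self_mem_nhdsWithin, nhdsWithin_le_nhds (Metric.ball_mem_nhds 0 ht)]
      with y hy hyt
    exact hpos y (norm_pos_iff.mpr hy) (mem_ball_zero_iff.mp hyt).le
  · exact hpos x h0 hx

theorem mul_sub_le_of_max_neg_div_le {a b H U V : ℝ} (hb : 0 < b) (hU : 0 ≤ U)
    (haH : max (-a) 0 / b ≤ H) : b * (V - H * U) ≤ b * V + a * U := by
  rw [div_le_iff₀ hb] at haH
  nlinarith [le_max_left (-a) 0]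

theorem stmt16_general {m : ℕ} (hm : 2 ≤ m) (σ H : ℝ) (hσ : 1 < σ) (hH : 0 < H)
    (Q : ℝ → ℝ)
    (hQpos : ∀ t > (0:ℝ), 0 < Q t)
    (hQmono : ∀ s t : ℝ, 0 < s → s ≤ t → Q s ≤ Q t)
    (hQo : Q =o[atTop] fun t => t ^ 2)
    (a b : EuclideanSpace ℝ (Fin m) → ℝ) (hb : Continuous b)
    (hbQ : ∀ x : EuclideanSpace ℝ (Fin m), 0 < ‖x‖ → 1 / Q ‖x‖ ≤ b x)
    (haH : ∀ x, max (-a x) 0 / b x ≤ H)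
    (u : EuclideanSpace ℝ (Fin m) → ℝ) (hu : ContDiff ℝ 2 u)
    (hupos : ∀ x, 0 ≤ u x)
    (hineq : ∀ x, b x * u x ^ σ + a x * u x ≤ euclideanLaplacian u x) :
    ∀ x, u x ≤ H ^ (1 / (σ - 1)) := by
  have : Nonempty (Fin m) := ⟨⟨0, by omega⟩⟩
  have hσ1 : 0 < σ - 1 := by linarith
  intro x₀
  refine le_of_forall_pos_le_add fun ε hε => ?_
  obtain ⟨n, hn⟩ := exists_nat_gt (2 / (σ - 1))
  have hnσ : 2 ≤ n * (σ - 1) := ((div_lt_iff₀ hσ1).mp hn).le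
  set C : ℝ := 4 * n * (n + 1) + 2 * n * m
  have hC : 0 < C := by
    have : (0 : ℝ) < n := by nlinarith
    positivity
  obtain ⟨R, hR, hQR⟩ := exists_pos_le_mul_sq_of_isLittleO hQo (norm_nonneg x₀)
    (c := (σ - 1) / σ * ε ^ (σ - 1) / C) (by positivity)
  have hQ : 0 < Q (‖x₀‖ + R) := hQpos _ (by positivity)
  have hbR : ∀ x, ‖x - x₀‖ < R → 1 / Q (‖x₀‖ + R) ≤ b x := fun x hx =>
    one_div_le_of_norm_le hQpos hQmono hb hbQ (by positivity)
      (by linarith [norm_le_norm_add_norm_sub' x x₀])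
  refine le_add_of_mul_rpow_sub_mul_le_euclideanLaplacian hu hσ (by positivity)
    (by rw [← Real.rpow_mul hH.le, one_div_mul_cancel hσ1.ne', Real.rpow_one]) hε hR hnσ hQ hbR
    (fun x hx => (mul_sub_le_of_max_neg_div_le ((one_div_pos.mpr hQ).trans_le (hbR x hx))
      (hupos x) (haH x)).trans (hineq x)) ?_
  rw [div_mul_eq_mul_div, le_div_iff₀ hC] at hQR
  linarith

theorem stmt16 {m : ℕ} (hm : 2 ≤ m) (σ H p : ℝ) (hσ : 1 < σ) (hH : 0 < H) (hp : 0 < p)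
    (Q : ℝ → ℝ)
    (hQpos : ∀ t > (0:ℝ), 0 < Q t)
    (hQmono : ∀ s t : ℝ, 0 < s → s ≤ t → Q s ≤ Q t)
    (hQo : Q =o[atTop] fun t => t ^ 2)
    (a b : EuclideanSpace ℝ (Fin m) → ℝ) (ha : Continuous a) (hb : Continuous b)
    (hbQ : ∀ x : EuclideanSpace ℝ (Fin m), 0 < ‖x‖ → 1 / Q ‖x‖ ≤ b x)
    (haminus : ∃ C : ℝ, ∀ x, max (-a x) 0 ≤ C)
    (haH : ∀ x, max (-a x) 0 / b x ≤ H)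
    (u : EuclideanSpace ℝ (Fin m) → ℝ) (hu : ContDiff ℝ 2 u)
    (hupos : ∀ x, 0 ≤ u x)
    (hineq : ∀ x, b x * u x ^ σ + a x * u x ≤ euclideanLaplacian u x)
    (hliminf : ∃ C : ℝ, ∃ᶠ r in atTop,
      Q r / r ^ 2 * ∫ x in Metric.ball (0 : EuclideanSpace ℝ (Fin m)) r, |u x| ^ p ≤ C) :
    ∀ x, u x ≤ H ^ (1 / (σ - 1)) :=
  stmt16_general hm σ H hσ hH Q hQpos hQmono hQo a b hb hbQ haH u hu hupos hineq
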